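/- arXiv:1706.02089 — 2 statements merged into one kernel-verified Lean document; each statement's English description precedes it below -/
import Mathlib

section
/- Let G be a group and V a finite-dimensional complex G-module admitting a non-degenerate G-invariant skew-symmetric bilinear form ω and a non-degenerate G-invariant symmetric bilinear form σ. Then V decomposes as a direct sum of G-submodules V = V₊ ⊕ V₋ such that ω vanishes identically on V₊ and on V₋ (so V₊ and V₋ are isotropic for ω), and ω induces a perfect pairing between V₊ and V₋; in particular V ≅ V₊ ⊕ (V₊)^* as G-modules. -/
/-!
Let `τ` be the endomorphism with `σ (τ v) v' = ω v v'`. It commutes with `G`, is injective, and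
is skew-adjoint for `σ`, hence also for `ω`. For a form `B` and a `B`-skew-adjoint `τ`,
generalized eigenspaces of `τ` for eigenvalues `a`, `b` with `a + b ≠ 0` are `B`-orthogonal.
Choosing a half-plane `H` of `ℂ` containing exactly one of `μ`, `-μ` for each `μ ≠ 0`, the sums of
the generalized eigenspaces over `H` and over `-H` are `G`-stable, `ω`-isotropic, and span `V`;
nondegeneracy of `ω` then makes them complementary and in perfect duality.
-/

open Module LinearMap
open scoped Pointwise

theorem LinearMap.IsSkewAdjoint.apply_eq_zero_of_mem_maxGenEigenspace {R M : Type*} [CommRing R]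
    [NoZeroDivisors R] [AddCommGroup M] [Module R M] {B : M →ₗ[R] M →ₗ[R] R} {f : End R M}
    (hf : IsSkewAdjoint B f) {a b : R} (hab : a + b ≠ 0) {x y : M}
    (hx : x ∈ f.maxGenEigenspace a) (hy : y ∈ f.maxGenEigenspace b) : B x y = 0 := by
  obtain ⟨k, hk⟩ := (End.mem_maxGenEigenspace f a x).mp hx
  obtain ⟨l, hl⟩ := (End.mem_maxGenEigenspace f b y).mp hy
  clear hx hy
  induction k generalizing x y l with
  | zero => simp_all
  | succ k ihk =>
    induction l generalizing y with
    | zero => simp_all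
    | succ l ihl =>
      have hx' : B ((f - a • 1) x) y = 0 := ihk (by rwa [← End.mul_apply, ← pow_succ]) _ hl
      have hy' : B x ((f - b • 1) y) = 0 := ihl (by rwa [← End.mul_apply, ← pow_succ])
      simp only [sub_apply, smul_apply, End.one_apply, map_sub, map_smul, LinearMap.sub_apply,
        LinearMap.smul_apply, smul_eq_mul] at hx' hy'
      have hskew : B (f x) y = -B x (f y) := by simpa using hf x y
      have : (a + b) * B x y = 0 := by linear_combination hskew - hx' - hy'
      exact (mul_eq_zero.mp this).resolve_left hab

theorem LinearMap.SeparatingLeft.eq_zero_of_sup_eq_top {R M N P : Type*} [CommSemiring R]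
    [AddCommMonoid M] [Module R M] [AddCommMonoid N] [Module R N] [AddCommMonoid P] [Module R P]
    {B : M →ₗ[R] N →ₗ[R] P} (hB : B.SeparatingLeft) {W₁ W₂ : Submodule R N}
    (hW : W₁ ⊔ W₂ = ⊤) {x : M} (h₁ : ∀ y ∈ W₁, B x y = 0) (h₂ : ∀ y ∈ W₂, B x y = 0) :
    x = 0 := by
  refine hB x fun y => ?_
  obtain ⟨y₁, hy₁, y₂, hy₂, rfl⟩ := Submodule.mem_sup.mp (hW ▸ Submodule.mem_top : y ∈ W₁ ⊔ W₂)
  rw [map_add, h₁ y₁ hy₁, h₂ y₂ hy₂, add_zero]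

namespace Module.End

noncomputable def spectralSubspace {R M : Type*} [CommRing R] [AddCommGroup M] [Module R M]
    (f : End R M) (S : Set R) : Submodule R M :=
  ⨆ μ ∈ S, f.maxGenEigenspace μ

section

variable {R M : Type*} [CommRing R] [AddCommGroup M] [Module R M] {f : End R M}

theorem mapsTo_spectralSubspace_of_comm {g : End R M} (h : Commute f g) (S : Set R) :
    Set.MapsTo g (f.spectralSubspace S) (f.spectralSubspace S) := by
  intro x hx
  suffices f.spectralSubspace S ≤ (f.spectralSubspace S).comap g from this hx
  exact iSup₂_le fun μ hμ y hy => le_iSup₂ (f := fun μ (_ : μ ∈ S) => f.maxGenEigenspace μ) μ hμ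
    (mapsTo_maxGenEigenspace_of_comm h μ hy)

theorem apply_eq_zero_of_mem_spectralSubspace {B : M →ₗ[R] M →ₗ[R] R} {S T : Set R}
    (h : ∀ a ∈ S, ∀ b ∈ T, ∀ x ∈ f.maxGenEigenspace a, ∀ y ∈ f.maxGenEigenspace b, B x y = 0)
    {x y : M} (hx : x ∈ f.spectralSubspace S) (hy : y ∈ f.spectralSubspace T) : B x y = 0 := by
  suffices f.spectralSubspace S ≤ LinearMap.ker (B.flip y) from this hx
  refine iSup₂_le fun a ha x hx => ?_
  suffices f.spectralSubspace T ≤ LinearMap.ker (B x) from this hy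
  exact iSup₂_le fun b hb y hy => h a ha b hb x hx y hy

end

theorem spectralSubspace_sup_eq_top {K V : Type*} [Field K] [IsAlgClosed K] [AddCommGroup V]
    [Module K V] [FiniteDimensional K V] {f : End K V} {S T : Set K}
    (hST : ∀ μ, f.HasEigenvalue μ → μ ∈ S ∨ μ ∈ T) :
    f.spectralSubspace S ⊔ f.spectralSubspace T = ⊤ := by
  rw [eq_top_iff, ← iSup_maxGenEigenspace_eq_top f]
  refine iSup_le fun μ => ?_
  by_cases hμ : f.HasEigenvalue μ
  · rcases hST μ hμ with h | h
    · exact le_sup_of_le_left (le_iSup₂_of_le μ h le_rfl)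
    · exact le_sup_of_le_right (le_iSup₂_of_le μ h le_rfl)
  · have : f.maxGenEigenspace μ = ⊥ :=
      not_ne_iff.mp fun h => hμ (HasUnifEigenvalue.lt (k := ⊤) zero_lt_one h)
    exact this ▸ bot_le

theorem ne_zero_of_hasEigenvalue_of_injective {R M : Type*} [CommRing R] [AddCommGroup M]
    [Module R M] {f : End R M} (hf : Function.Injective f) {μ : R} (hμ : f.HasEigenvalue μ) :
    μ ≠ 0 := by
  rintro rfl
  exact hμ (show f.eigenspace 0 = ⊥ by rw [eigenspace_zero, LinearMap.ker_eq_bot.mpr hf])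

end Module.End

namespace LinearMap.BilinForm

variable {K V : Type*} [Field K] [AddCommGroup V] [Module K V] [FiniteDimensional K V]
  {ω σ : LinearMap.BilinForm K V} (hσ : σ.Nondegenerate)

theorem isSkewAdjoint_symmCompOfNondegenerate (hω : ω.IsAlt) (hσs : σ.IsSymm) :
    IsSkewAdjoint ω (ω.symmCompOfNondegenerate σ hσ) := by
  intro x y
  set τ := ω.symmCompOfNondegenerate σ hσ
  calc ω (τ x) y = -ω y (τ x) := (hω.neg_eq y (τ x)).symm
    _ = -σ (τ y) (τ x) := by rw [symmCompOfNondegenerate_left_apply]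
    _ = -σ (τ x) (τ y) := by rw [hσs.eq]
    _ = ω x ((-τ) y) := by rw [symmCompOfNondegenerate_left_apply]; simp

theorem injective_symmCompOfNondegenerate (hω : ω.SeparatingLeft) :
    Function.Injective (ω.symmCompOfNondegenerate σ hσ) := by
  rw [← LinearMap.ker_eq_bot, eq_bot_iff]
  intro x hx
  refine hω x fun y => ?_
  rw [← ω.symmCompOfNondegenerate_left_apply hσ, LinearMap.mem_ker.mp hx, map_zero,
    LinearMap.zero_apply]

theorem commute_symmCompOfNondegenerate {g : End K V} (hg : Function.Surjective g)
    (hωg : ∀ x y, ω (g x) (g y) = ω x y) (hσg : ∀ x y, σ (g x) (g y) = σ x y) :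
    Commute (ω.symmCompOfNondegenerate σ hσ) g := by
  ext x
  refine sub_eq_zero.mp (hσ.1 _ fun z => ?_)
  obtain ⟨z, rfl⟩ := hg z
  rw [map_sub, LinearMap.sub_apply, sub_eq_zero, End.mul_apply, End.mul_apply,
    symmCompOfNondegenerate_left_apply, hσg, symmCompOfNondegenerate_left_apply, hωg]

end LinearMap.BilinForm

namespace Complex

/-- The paper's `V₊` collects the eigenvalues with positive imaginary part; as the eigenvalues of
`τ` need not be imaginary here, the positive real half-axis is added. -/
def halfPlane : Set ℂ := {z | 0 < z.im ∨ z.im = 0 ∧ 0 < z.re}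

theorem add_ne_zero_of_mem_halfPlane {a b : ℂ} (ha : a ∈ halfPlane) (hb : b ∈ halfPlane) :
    a + b ≠ 0 := by
  intro h
  have him : a.im + b.im = 0 := by simpa using congrArg im h
  have hre : a.re + b.re = 0 := by simpa using congrArg re h
  rcases ha with ha | ⟨ha, ha'⟩ <;> rcases hb with hb | ⟨hb, hb'⟩ <;> linarith

theorem mem_halfPlane_or_neg_mem {z : ℂ} (hz : z ≠ 0) : z ∈ halfPlane ∨ -z ∈ halfPlane := by
  simp only [halfPlane, Set.mem_ofPred_eq, neg_im, neg_re, Left.neg_pos_iff, neg_eq_zero]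
  rcases lt_trichotomy z.im 0 with h | h | h
  · exact .inr (.inl h)
  · rcases lt_trichotomy z.re 0 with h' | h' | h'
    · exact .inr (.inr ⟨h, h'⟩)
    · exact absurd (Complex.ext h' h) hz
    · exact .inl (.inr ⟨h, h'⟩)
  · exact .inl (.inl h)

theorem add_ne_zero_of_mem_neg_halfPlane {a b : ℂ} (ha : a ∈ -halfPlane)
    (hb : b ∈ -halfPlane) : a + b ≠ 0 := by
  rw [← neg_ne_zero, neg_add]
  exact add_ne_zero_of_mem_halfPlane ha hb

end Complex

open Complex LinearMap.BilinForm Module.End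

/-- If a finite-dimensional complex `G`-module `V` admits a nondegenerate
`G`-invariant alternating bilinear form `ω` and a nondegenerate `G`-invariant symmetric
bilinear form `σ`, then `V = V₊ ⊕ V₋` with both summands `G`-invariant and `ω`-isotropic,
and `ω` induces a perfect pairing between `V₊` and `V₋` (so `V ≅ V₊ ⊕ V₊*`). -/
theorem isotropic_decomposition_of_invariant_forms
    (G : Type*) [Group G] (V : Type*) [AddCommGroup V] [Module ℂ V]
    [FiniteDimensional ℂ V] (ρ : Representation ℂ G V)
    (ω σ : LinearMap.BilinForm ℂ V)
    (hωalt : ω.IsAlt) (hωnd : ω.Nondegenerate)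
    (hσsymm : σ.IsSymm) (hσnd : σ.Nondegenerate)
    (hωinv : ∀ (g : G) (v v' : V), ω (ρ g v) (ρ g v') = ω v v')
    (hσinv : ∀ (g : G) (v v' : V), σ (ρ g v) (ρ g v') = σ v v') :
    ∃ Vp Vm : Submodule ℂ V,
      (∀ (g : G) (v : V), v ∈ Vp → ρ g v ∈ Vp) ∧
      (∀ (g : G) (v : V), v ∈ Vm → ρ g v ∈ Vm) ∧
      IsCompl Vp Vm ∧
      (∀ v ∈ Vp, ∀ v' ∈ Vp, ω v v' = 0) ∧
      (∀ v ∈ Vm, ∀ v' ∈ Vm, ω v v' = 0) ∧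
      (∀ v ∈ Vp, (∀ v' ∈ Vm, ω v v' = 0) → v = 0) ∧
      (∀ v' ∈ Vm, (∀ v ∈ Vp, ω v v' = 0) → v' = 0) := by
  set τ : End ℂ V := ω.symmCompOfNondegenerate σ hσnd
  have hskew := isSkewAdjoint_symmCompOfNondegenerate hσnd hωalt hσsymm
  have hcomm g : Commute τ (ρ g) :=
    commute_symmCompOfNondegenerate hσnd (ρ.apply_bijective g).2 (hωinv g) (hσinv g)
  have hiso {S : Set ℂ} (hS : ∀ a ∈ S, ∀ b ∈ S, a + b ≠ 0) :
      ∀ v ∈ τ.spectralSubspace S, ∀ v' ∈ τ.spectralSubspace S, ω v v' = 0 :=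
    fun _ hv _ hv' => apply_eq_zero_of_mem_spectralSubspace (fun a ha b hb _ hx _ hy =>
      hskew.apply_eq_zero_of_mem_maxGenEigenspace (hS a ha b hb) hx hy) hv hv'
  set Vp := τ.spectralSubspace halfPlane
  set Vm := τ.spectralSubspace (-halfPlane)
  have hisoP : ∀ v ∈ Vp, ∀ v' ∈ Vp, ω v v' = 0 :=
    hiso fun _ ha _ hb => add_ne_zero_of_mem_halfPlane ha hb
  have hisoM : ∀ v ∈ Vm, ∀ v' ∈ Vm, ω v v' = 0 :=
    hiso fun _ ha _ hb => add_ne_zero_of_mem_neg_halfPlane ha hb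
  have hsup : Vp ⊔ Vm = ⊤ :=
    spectralSubspace_sup_eq_top fun _ hμ => mem_halfPlane_or_neg_mem
      (ne_zero_of_hasEigenvalue_of_injective (injective_symmCompOfNondegenerate hσnd hωnd.1) hμ)
  have hpairP : ∀ v ∈ Vp, (∀ v' ∈ Vm, ω v v' = 0) → v = 0 :=
    fun v hv => hωnd.1.eq_zero_of_sup_eq_top hsup (hisoP v hv)
  have hpairM : ∀ v' ∈ Vm, (∀ v ∈ Vp, ω v v' = 0) → v' = 0 := fun v' hv' h =>
    (flip_separatingLeft.mpr hωnd.2).eq_zero_of_sup_eq_top hsup h (hisoM · · v' hv')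
  refine ⟨Vp, Vm, fun g _ hv => mapsTo_spectralSubspace_of_comm (hcomm g) _ hv,
    fun g _ hv => mapsTo_spectralSubspace_of_comm (hcomm g) _ hv,
    ⟨Submodule.disjoint_def.mpr fun v hv hv' => hpairP v hv (hisoM v hv'),
      codisjoint_iff.mpr hsup⟩, hisoP, hisoM, hpairP, hpairM⟩
end

section
/- Let μ : ℂ² × ℂ² → ℂ³, μ(z₁,z₂,w₁,w₂) = (z₁w₂, z₂w₁, z₁w₁ - z₂w₂), be the moment map for the SL₂(ℂ)-action on the defining representation R₁ and its dual. Then the ideal (μ₁, μ₂, μ₃) in ℂ[z₁,z₂,w₁,w₂] is not a radical ideal; indeed (z₁w₁)² lies in (μ) but z₁w₁ does not. -/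
/-!
Modulo `(μ)` we have `z₁w₁ ≡ z₂w₂`, so `(z₁w₁)² ≡ (z₁w₂)(z₂w₁) ≡ 0`. To see `z₁w₁ ∉ (μ)`, send
`z₁, w₂ ↦ a` and `z₂, w₁ ↦ b` in `ℂ[ε][ε] ≅ ℂ[a, b]/(a², b²)` (with `a = inl ε`, `b = ε`):
all three `μᵢ` vanish, but `z₁w₁ ↦ ab ≠ 0`.
-/

open MvPolynomial

theorem Ideal.notMem_span_of_map_eq_zero {R S F : Type*} [Semiring R] [Semiring S]
    [FunLike F R S] [RingHomClass F R S] (f : F) {s : Set R} (hs : ∀ a ∈ s, f a = 0) {x : R}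
    (hx : f x ≠ 0) : x ∉ Ideal.span s :=
  fun hmem => hx <| (Ideal.span_le (I := RingHom.ker f)).2 hs hmem

namespace DualNumber

open TrivSqZeroExt

variable {R : Type*} [CommSemiring R]

theorem inl_eps_mul_inl_eps : (inl ε * inl ε : R[ε][ε]) = 0 := by
  rw [← inl_mul, eps_mul_eps, inl_zero]

theorem inl_eps_mul_eps_ne_zero [Nontrivial R] : (inl ε * ε : R[ε][ε]) ≠ 0 := by
  intro h
  simpa [snd_mul] using congrArg (fun x => snd (snd x)) h

end DualNumber

theorem sq_mul_mem_span_mul_mul_sub_mul {R : Type*} [CommRing R] (a b c d : R) :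
    (a * c) ^ 2 ∈ Ideal.span {a * d, b * c, a * c - b * d} := by
  rw [show (a * c) ^ 2 = (a * d) * (b * c) + a * c * (a * c - b * d) by ring]
  exact Ideal.add_mem _ (Ideal.mul_mem_right _ _ (Ideal.subset_span (by simp)))
    (Ideal.mul_mem_left _ _ (Ideal.subset_span (by simp)))

open DualNumber TrivSqZeroExt in
theorem X_mul_X_notMem_span_moment (R : Type*) [CommRing R] [Nontrivial R] :
    (X 0 * X 2 : MvPolynomial (Fin 4) R) ∉
      Ideal.span {X 0 * X 3, X 1 * X 2, X 0 * X 2 - X 1 * X 3} := by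
  refine Ideal.notMem_span_of_map_eq_zero (aeval ![(inl ε : R[ε][ε]), ε, ε, inl ε]) ?_ ?_
  · simp [inl_eps_mul_inl_eps, eps_mul_eps, mul_comm (inl ε : R[ε][ε])]
  · simpa using inl_eps_mul_eps_ne_zero

/-- For the moment map `μ = (z₁w₂, z₂w₁, z₁w₁ - z₂w₂)` of the
`SL₂(ℂ)`-action on `R₁ ⊕ R₁*`, the ideal `(μ₁,μ₂,μ₃) ⊆ ℂ[z₁,z₂,w₁,w₂]` is not radical:
`(z₁w₁)²` lies in the ideal but `z₁w₁` does not.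
(Variables: `X 0 = z₁`, `X 1 = z₂`, `X 2 = w₁`, `X 3 = w₂`.) -/
theorem sl2_R1_moment_ideal_not_radical :
    let μ₁ : MvPolynomial (Fin 4) ℂ := X 0 * X 3
    let μ₂ : MvPolynomial (Fin 4) ℂ := X 1 * X 2
    let μ₃ : MvPolynomial (Fin 4) ℂ := X 0 * X 2 - X 1 * X 3
    let I : Ideal (MvPolynomial (Fin 4) ℂ) := Ideal.span {μ₁, μ₂, μ₃}
    (X 0 * X 2 : MvPolynomial (Fin 4) ℂ) ^ 2 ∈ I ∧
    (X 0 * X 2 : MvPolynomial (Fin 4) ℂ) ∉ I ∧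
    ¬ I.IsRadical := by
  intro μ₁ μ₂ μ₃ I
  have hsq : (X 0 * X 2 : MvPolynomial (Fin 4) ℂ) ^ 2 ∈ I :=
    sq_mul_mem_span_mul_mul_sub_mul (X 0) (X 1) (X 2) (X 3)
  have hnot : (X 0 * X 2 : MvPolynomial (Fin 4) ℂ) ∉ I := X_mul_X_notMem_span_moment ℂ
  exact ⟨hsq, hnot, fun hrad => hnot (hrad ⟨2, hsq⟩)⟩
end
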